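/- arXiv:math/0111140 — 3 statements merged into one kernel-verified Lean document; each statement's English description precedes it below -/
import Mathlib

section
/- If λ →_{m:e} ν (i.e., ν/λ is a disjoint union of m e-ribbons whose heads either lie in row 1 or directly below cells of λ), then λ and ν have the same e-core. -/
open Finset

/-- A partition: a weakly decreasing, eventually-zero sequence of naturals.
`parts i` is the `(i+1)`-st part (0-indexed). -/
structure YPartition where
  parts : ℕ → ℕ
  antitone : ∀ ⦃i j : ℕ⦄, i ≤ j → parts j ≤ parts i
  eventually_zero : ∃ N, ∀ i, N ≤ i → parts i = 0

namespace YPartition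

/-- The length of a partition: the number of nonzero parts. -/
noncomputable def length (l : YPartition) : ℕ :=
  sInf {N | ∀ i, N ≤ i → l.parts i = 0}

/-- The size `|λ|` of a partition: the sum of its parts. -/
noncomputable def size (l : YPartition) : ℕ :=
  ∑ i ∈ Finset.range l.length, l.parts i

/-- The beta-numbers of `l` with respect to `k` beads: `λ_i + k - i` for `i = 1, …, k`
(here 0-indexed: bead for row `i+1` sits at `parts i + (k - 1 - i)`). -/
def betaSet (l : YPartition) (k : ℕ) : Finset ℕ :=
  (Finset.range k).image fun i => l.parts i + (k - 1 - i)

/-- Dominance order: `l ⊵ m`. -/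
def Dominates (l m : YPartition) : Prop :=
  ∀ j, ∑ i ∈ Finset.range j, m.parts i ≤ ∑ i ∈ Finset.range j, l.parts i

/-- Inserting an empty runner before runner `α` into an `e`-abacus: a bead at
position `m*e + r` moves to `m*(e+1) + r` if `r < α` and to `m*(e+1) + r + 1` otherwise. -/
def insRunner (e α p : ℕ) : ℕ :=
  (p / e) * (e + 1) + p % e + (if p % e < α then 0 else 1)

/-- `lp` is the partition `λ⁺` obtained from `l` by inserting an empty runner at
position `α` into its `e`-abacus with `k` beads. -/
def IsPlus (e α k : ℕ) (l lp : YPartition) : Prop :=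
  lp.length ≤ k ∧ lp.betaSet k = (l.betaSet k).image (insRunner e α)

/-- A partition is `d`-regular if no `d` of its nonzero parts are equal. -/
def Regular (d : ℕ) (l : YPartition) : Prop :=
  ¬ ∃ i, l.parts i ≠ 0 ∧ l.parts (i + (d - 1)) = l.parts i

/-- The Young diagram of a partition, as a set of (row, column) cells, 0-indexed. -/
def cells (l : YPartition) : Set (ℕ × ℕ) := {x | x.2 < l.parts x.1}

/-- `c 0, c 1, …, c (e-1)` are the successive cells of a ribbon: each next cell is
directly below, or directly to the left of, the previous cell. -/
def RibbonSteps (e : ℕ) (c : ℕ → ℕ × ℕ) : Prop :=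
  ∀ i, i + 1 < e →
    (c (i + 1) = ((c i).1 + 1, (c i).2)) ∨
    ((c i).2 = (c (i + 1)).2 + 1 ∧ (c (i + 1)).1 = (c i).1)

/-- `R` is an `e`-ribbon with cell enumeration `c` (head `c 0`). -/
def IsRibbonC (e : ℕ) (c : ℕ → ℕ × ℕ) (R : Set (ℕ × ℕ)) : Prop :=
  R = c '' (Set.Iio e) ∧ Set.InjOn c (Set.Iio e) ∧ RibbonSteps e c

/-- The spin of an `e`-ribbon: the number of vertical steps. -/
def spinOf (e : ℕ) (c : ℕ → ℕ × ℕ) : ℕ :=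
  ((Finset.range (e - 1)).filter fun i => (c (i + 1)).1 = (c i).1 + 1).card

/-- The head of the ribbon lies in row 1 or directly below a cell of `l`. -/
def HeadOK (l : YPartition) (c : ℕ → ℕ × ℕ) : Prop :=
  (c 0).1 = 0 ∨ ((c 0).1 - 1, (c 0).2) ∈ cells l

/-- `l` is obtained from `n` by removing a single rim hook (ribbon) of length `e`. -/
def RemoveRibbon (e : ℕ) (n l : YPartition) : Prop :=
  cells l ⊆ cells n ∧ ∃ c, IsRibbonC e c (cells n \ cells l)

/-- `κ` is the `e`-core of `l`: obtained by repeatedly removing `e`-rim-hooks,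
and no further `e`-rim-hook can be removed. -/
def IsECoreOf (e : ℕ) (κ l : YPartition) : Prop :=
  Relation.ReflTransGen (RemoveRibbon e) l κ ∧ ¬ ∃ m, RemoveRibbon e κ m

/-- `l` has `e`-weight `w`: `|l| = |e-core of l| + w * e`. -/
def EWeight (e : ℕ) (l : YPartition) (w : ℕ) : Prop :=
  ∃ κ, IsECoreOf e κ l ∧ l.size = κ.size + w * e

/-- `λ →_{m:e} ν` with total spin `s`: `[ν] \ [λ]` is a disjoint union of `m`
`e`-ribbons, each of whose heads lies in row 1 or directly below a cell of `λ`,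
the sum of whose spins is `s`. -/
def HAddSpin (e m s : ℕ) (l n : YPartition) : Prop :=
  cells l ⊆ cells n ∧
  ∃ (R : Fin m → Set (ℕ × ℕ)) (c : Fin m → ℕ → ℕ × ℕ),
    ((cells n \ cells l) = ⋃ i, R i) ∧
    (Pairwise fun i j => Disjoint (R i) (R j)) ∧
    (∀ i, IsRibbonC e (c i) (R i) ∧ HeadOK l (c i)) ∧
    s = ∑ i, spinOf e (c i)

/-- `λ →_{m:e} ν`. -/
def HAdd (e m : ℕ) (l n : YPartition) : Prop := ∃ s, HAddSpin e m s l n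

/-- `x` is an addable node of `l`. -/
def Addable (l : YPartition) (x : ℕ × ℕ) : Prop :=
  x ∉ cells l ∧ ∃ n : YPartition, cells n = insert x (cells l)

/-- `x` is a removable node of `l`. -/
def Removable (l : YPartition) (x : ℕ × ℕ) : Prop :=
  x ∈ cells l ∧ ∃ n : YPartition, cells n = cells l \ {x}

/-- The `e`-residue of a node `(c,d)`: `d - c mod e`. -/
def res (e : ℕ) (x : ℕ × ℕ) : ZMod e := (x.2 : ZMod e) - (x.1 : ZMod e)

/-- `N_i(λ,ν) = #{addable i-nodes of λ above x} - #{removable i-nodes of λ above x}`,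
where `i = res e x` and `y` is above `x` iff `y.1 < x.1`. -/
noncomputable def Nnum (e : ℕ) (l : YPartition) (x : ℕ × ℕ) : ℤ :=
  ({y | Addable l y ∧ res e y = res e x ∧ y.1 < x.1}.ncard : ℤ) -
  ({y | Removable l y ∧ res e y = res e x ∧ y.1 < x.1}.ncard : ℤ)

end YPartition

/-!
Among the ribbons of `ν / λ`, take one whose head lies in the rightmost column. No cell of `ν`
directly right of or directly below a cell of this ribbon lies outside it. To the right: at the
head because every ribbon lies weakly left of its own head, and further along by induction. Below:
a cell of another ribbon there cannot be that ribbon's head, by the head condition, so the other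
ribbon reaches it from the cell diagonally below-right; but by the induction that cell belongs to
our ribbon. Hence the ribbon is a rim hook of `ν`, and removing the ribbons one at a time leads
from `ν` to `λ`, so every `e`-core of `λ` is an `e`-core of `ν`.
-/

lemma Fin.iUnion_succAbove_eq_sdiff {α : Type*} {m : ℕ} {R : Fin (m + 1) → Set α}
    (hR : Pairwise fun i j => Disjoint (R i) (R j)) (i : Fin (m + 1)) :
    ⋃ j, R (i.succAbove j) = (⋃ j, R j) \ R i := by
  ext x
  simp only [Set.mem_sdiff, Set.mem_iUnion]
  constructor
  · rintro ⟨j, hj⟩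
    exact ⟨⟨_, hj⟩, Set.disjoint_left.1 (hR (Fin.succAbove_ne i j)) hj⟩
  · rintro ⟨⟨j, hj⟩, hxi⟩
    obtain ⟨j', hj'⟩ := Fin.exists_succAbove_eq (x := j) (y := i) fun h => hxi (h ▸ hj)
    exact ⟨j', hj' ▸ hj⟩

theorem Relation.exists_reflTransGen_normalForm {α : Type*} {r : α → α → Prop} (f : α → ℕ)
    (hf : ∀ a b, r a b → f b < f a) (a : α) : ∃ b, Relation.ReflTransGen r a b ∧ ¬ ∃ c, r b c := by
  obtain ⟨b, hab, hmin⟩ := (InvImage.wf f wellFounded_lt).has_min {b | Relation.ReflTransGen r a b}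
    ⟨a, .refl⟩
  exact ⟨b, hab, fun ⟨c, hbc⟩ => hmin c (hab.tail hbc) (hf b c hbc)⟩

namespace YPartition

lemma isLowerSet_cells (p : YPartition) : IsLowerSet (cells p) := by
  rintro ⟨a, b⟩ ⟨c, d⟩ ⟨hca, hdb⟩ h
  exact lt_of_le_of_lt hdb (lt_of_lt_of_le h (p.antitone hca))

lemma cells_injective : Function.Injective cells := by
  rintro ⟨p, _, _⟩ ⟨q, _, _⟩ h
  congr
  funext r
  exact eq_of_forall_lt_iff fun y => Set.ext_iff.1 h (r, y)

lemma cells_finite (p : YPartition) : (cells p).Finite := by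
  obtain ⟨N, hN⟩ := p.eventually_zero
  refine ((Set.finite_Iio N).prod (Set.finite_Iio (p.parts 0))).subset fun ⟨r, y⟩ hy => ?_
  have hy : y < p.parts r := hy
  refine ⟨show r < N from ?_, lt_of_lt_of_le hy (p.antitone r.zero_le)⟩
  by_contra! hNr
  rw [hN r hNr] at hy
  exact Nat.not_lt_zero y hy

lemma exists_cells_eq_of_isLowerSet {n : YPartition} {S : Set (ℕ × ℕ)} (hSn : S ⊆ cells n)
    (hS : IsLowerSet S) : ∃ p : YPartition, cells p = S := by
  have hmem : ∀ r y, (r, y) ∈ S ↔ y < sInf {y | (r, y) ∉ S} := by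
    intro r y
    have hne : {y | (r, y) ∉ S}.Nonempty := ⟨n.parts r, fun h => lt_irrefl (n.parts r) (hSn h)⟩
    refine ⟨fun h => ?_, fun h => not_not.1 fun h' => (Nat.sInf_le h').not_gt h⟩
    by_contra! hle
    exact Nat.sInf_mem hne (hS (Prod.mk_le_mk.2 ⟨le_rfl, hle⟩) h)
  refine ⟨⟨fun r => sInf {y | (r, y) ∉ S}, fun i j hij => ?_, ?_⟩,
    Set.ext fun x => (hmem x.1 x.2).symm⟩
  · by_contra! hlt
    exact lt_irrefl _ ((hmem i _).1 (hS (Prod.mk_le_mk.2 ⟨hij, le_rfl⟩) ((hmem j _).2 hlt)))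
  · obtain ⟨N, hN⟩ := n.eventually_zero
    refine ⟨N, fun i hi => Nat.eq_zero_of_le_zero (Nat.sInf_le fun h => ?_)⟩
    have h0 : 0 < n.parts i := hSn h
    rw [hN i hi] at h0
    exact lt_irrefl 0 h0

lemma isLowerSet_of_step {S : Set (ℕ × ℕ)} (hleft : ∀ r y, (r, y + 1) ∈ S → (r, y) ∈ S)
    (hup : ∀ r y, (r + 1, y) ∈ S → (r, y) ∈ S) : IsLowerSet S := by
  have hrow : ∀ r y d, (r, y + d) ∈ S → (r, y) ∈ S := by
    intro r y d
    induction d with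
    | zero => exact id
    | succ d ih => exact fun h => ih (hleft _ _ h)
  have hcol : ∀ r y d, (r + d, y) ∈ S → (r, y) ∈ S := by
    intro r y d
    induction d with
    | zero => exact id
    | succ d ih => exact fun h => ih (hup _ _ h)
  rintro ⟨a, b⟩ ⟨c, d⟩ hle h
  obtain ⟨hca, hdb⟩ := Prod.mk_le_mk.1 hle
  obtain ⟨i, rfl⟩ := Nat.exists_eq_add_of_le hca
  obtain ⟨j, rfl⟩ := Nat.exists_eq_add_of_le hdb
  exact hcol _ _ i (hrow _ _ j h)

def IsUpClosedAt (n : YPartition) (R : Set (ℕ × ℕ)) (z : ℕ × ℕ) : Prop :=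
  ((z.1, z.2 + 1) ∈ cells n → (z.1, z.2 + 1) ∈ R) ∧
  ((z.1 + 1, z.2) ∈ cells n → (z.1 + 1, z.2) ∈ R)

lemma isLowerSet_cells_diff {n : YPartition} {R : Set (ℕ × ℕ)}
    (hR : ∀ z ∈ R, IsUpClosedAt n R z) : IsLowerSet (cells n \ R) := by
  refine isLowerSet_of_step (fun r y h => ⟨?_, fun hR' => h.2 ((hR _ hR').1 h.1)⟩)
    (fun r y h => ⟨?_, fun hR' => h.2 ((hR _ hR').2 h.1)⟩)
  · exact isLowerSet_cells n (Prod.mk_le_mk.2 ⟨le_rfl, y.le_succ⟩) h.1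
  · exact isLowerSet_cells n (Prod.mk_le_mk.2 ⟨r.le_succ, le_rfl⟩) h.1

section Ribbon

variable {e : ℕ} {c : ℕ → ℕ × ℕ}

lemma RibbonSteps.step (h : RibbonSteps e c) {k : ℕ} (hk : k + 1 < e) :
    c (k + 1) = ((c k).1 + 1, (c k).2) ∨ c k = ((c (k + 1)).1, (c (k + 1)).2 + 1) := by
  rcases h k hk with hdown | ⟨hcol, hrow⟩
  · exact .inl hdown
  · exact .inr (Prod.ext hrow.symm hcol)

lemma RibbonSteps.fst_add_snd_zero (h : RibbonSteps e c) {k : ℕ} (hk : k < e) :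
    (c k).1 + (c 0).2 = (c k).2 + (c 0).1 + k := by
  induction k with
  | zero => omega
  | succ k ih =>
    have := ih (by omega)
    rcases h.step hk with hdown | hleft
    · rw [hdown]; dsimp only; omega
    · rw [hleft] at this; dsimp only at this; omega

lemma RibbonSteps.snd_le_snd_zero (h : RibbonSteps e c) {k : ℕ} (hk : k < e) :
    (c k).2 ≤ (c 0).2 := by
  induction k with
  | zero => exact le_rfl
  | succ k ih =>
    have := ih (by omega)
    rcases h.step hk with hdown | hleft
    · rw [hdown]; exact this
    · rw [hleft] at this; dsimp only at this; omega

lemma RibbonSteps.add_one_eq_of_apply_eq_right (h : RibbonSteps e c) {j k : ℕ} (hj : j < e)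
    (hk : k < e) (hjk : c j = ((c k).1, (c k).2 + 1)) : j + 1 = k := by
  have hcj := h.fst_add_snd_zero hj
  have hck := h.fst_add_snd_zero hk
  rw [hjk] at hcj
  dsimp only at hcj
  omega

variable {R : Set (ℕ × ℕ)} {n : YPartition}

lemma IsRibbonC.mem_iff (h : IsRibbonC e c R) {z : ℕ × ℕ} : z ∈ R ↔ ∃ k < e, c k = z := by
  rw [h.1]
  rfl

lemma IsRibbonC.apply_mem (h : IsRibbonC e c R) {k : ℕ} (hk : k < e) : c k ∈ R :=
  h.mem_iff.2 ⟨k, hk, rfl⟩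

lemma IsRibbonC.right_mem (hc : IsRibbonC e c R) {k : ℕ} (hk0 : 0 < k) (hk : k < e)
    (ih : ∀ j < k, IsUpClosedAt n R (c j)) (hn : ((c k).1, (c k).2 + 1) ∈ cells n) :
    ((c k).1, (c k).2 + 1) ∈ R := by
  obtain ⟨k, rfl⟩ : ∃ j, k = j + 1 := ⟨k - 1, by omega⟩
  rcases hc.2.2.step hk with hdown | hleft
  · -- after a downward step, the cell right of `c (k + 1)` lies below the cell right of `c k`
    rw [hdown] at hn ⊢
    have hr : ((c k).1, (c k).2 + 1) ∈ R :=
      (ih k k.lt_succ_self).1 (isLowerSet_cells n (Prod.mk_le_mk.2 ⟨Nat.le_succ _, le_rfl⟩) hn)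
    obtain ⟨j, hj, hcj⟩ := hc.mem_iff.1 hr
    have hjk := hc.2.2.add_one_eq_of_apply_eq_right hj (k.lt_succ_self.trans hk) hcj
    have hbelow := (ih j (by omega)).2
    rw [hcj] at hbelow
    exact hbelow hn
  · rw [← hleft]
    exact hc.apply_mem (by omega)

end Ribbon

section Tiling

variable {e m : ℕ} {l n : YPartition} {R : Fin m → Set (ℕ × ℕ)} {c : Fin m → ℕ → ℕ × ℕ}

lemma right_head_not_mem_cells (hD : cells n \ cells l = ⋃ i, R i)
    (hrib : ∀ i, IsRibbonC e (c i) (R i) ∧ HeadOK l (c i)) {i : Fin m}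
    (hmax : ∀ j, (c j 0).2 ≤ (c i 0).2) (he : 0 < e) :
    ((c i 0).1, (c i 0).2 + 1) ∉ cells n := by
  intro hn
  have hhead : c i 0 ∈ cells n \ cells l := hD ▸ Set.mem_iUnion_of_mem i ((hrib i).1.apply_mem he)
  have hl : ((c i 0).1, (c i 0).2 + 1) ∉ cells l := fun h =>
    hhead.2 (isLowerSet_cells l (Prod.mk_le_mk.2 ⟨le_rfl, Nat.le_succ _⟩) h)
  obtain ⟨j, hj⟩ := Set.mem_iUnion.1 (by rw [← hD]; exact ⟨hn, hl⟩ : _ ∈ ⋃ i, R i)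
  obtain ⟨k, hk, hck⟩ := (hrib j).1.mem_iff.1 hj
  have hleft := (hrib j).1.2.2.snd_le_snd_zero hk
  rw [hck] at hleft
  have := hmax j
  dsimp only at hleft
  omega

lemma below_mem_of_right_mem (hD : cells n \ cells l = ⋃ i, R i)
    (hdisj : Pairwise fun i j => Disjoint (R i) (R j))
    (hrib : ∀ i, IsRibbonC e (c i) (R i) ∧ HeadOK l (c i)) {i : Fin m} {k : ℕ} (hk : k < e)
    (ih : ∀ j < k, IsUpClosedAt n (R i) (c i j))
    (hright : ((c i k).1, (c i k).2 + 1) ∈ cells n → ((c i k).1, (c i k).2 + 1) ∈ R i)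
    (hn : ((c i k).1 + 1, (c i k).2) ∈ cells n) : ((c i k).1 + 1, (c i k).2) ∈ R i := by
  have hsub : ∀ j, R j ⊆ cells n \ cells l := fun j => by rw [hD]; exact Set.subset_iUnion R j
  have hz := hsub i ((hrib i).1.apply_mem hk)
  have hl : ((c i k).1 + 1, (c i k).2) ∉ cells l := fun h =>
    hz.2 (isLowerSet_cells l (Prod.mk_le_mk.2 ⟨Nat.le_succ _, le_rfl⟩) h)
  obtain ⟨j, hj⟩ := Set.mem_iUnion.1 (by rw [← hD]; exact ⟨hn, hl⟩ : _ ∈ ⋃ i, R i)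
  by_contra hi
  have hji : j ≠ i := by rintro rfl; exact hi hj
  obtain ⟨k', hk', hck'⟩ := (hrib j).1.mem_iff.1 hj
  -- by the head condition, the cell below `c i k` is not the head of `R j`
  obtain ⟨k', rfl⟩ : ∃ k'', k' = k'' + 1 := by
    rcases k' with _ | k'
    · rcases (hrib j).2 with h0 | h0 <;> rw [hck'] at h0 <;> dsimp only at h0
      · exact absurd h0 (Nat.succ_ne_zero _)
      · rw [Nat.add_sub_cancel] at h0
        exact absurd h0 hz.2
    · exact ⟨k', rfl⟩
  rcases (hrib j).1.2.2.step hk' with hdown | hleft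
  · rw [hck', Prod.ext_iff] at hdown
    have hprev : c j k' = c i k := Prod.ext (by dsimp only at hdown; omega) hdown.2.symm
    exact Set.disjoint_left.1 (hdisj hji) (hprev ▸ (hrib j).1.apply_mem (by omega))
      ((hrib i).1.apply_mem hk)
  · rw [hck'] at hleft
    dsimp only at hleft
    have hdiag : ((c i k).1 + 1, (c i k).2 + 1) ∈ R j := hleft ▸ (hrib j).1.apply_mem (by omega)
    have hdiagn := (hsub j hdiag).1
    obtain ⟨idx, hidx, hcidx⟩ := (hrib i).1.mem_iff.1
      (hright (isLowerSet_cells n (Prod.mk_le_mk.2 ⟨Nat.le_succ _, le_rfl⟩) hdiagn))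
    have hidxk := (hrib i).1.2.2.add_one_eq_of_apply_eq_right hidx hk hcidx
    have hbelow := (ih idx (by omega)).2
    rw [hcidx] at hbelow
    exact Set.disjoint_left.1 (hdisj hji) hdiag (hbelow hdiagn)

lemma isUpClosedAt_of_max (hD : cells n \ cells l = ⋃ i, R i)
    (hdisj : Pairwise fun i j => Disjoint (R i) (R j))
    (hrib : ∀ i, IsRibbonC e (c i) (R i) ∧ HeadOK l (c i)) {i : Fin m}
    (hmax : ∀ j, (c j 0).2 ≤ (c i 0).2) {k : ℕ} (hk : k < e) :
    IsUpClosedAt n (R i) (c i k) := by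
  induction k using Nat.strong_induction_on with
  | _ k ih =>
    have ih' : ∀ j < k, IsUpClosedAt n (R i) (c i j) := fun j hj => ih j hj (hj.trans hk)
    have hright : ((c i k).1, (c i k).2 + 1) ∈ cells n → ((c i k).1, (c i k).2 + 1) ∈ R i := by
      rcases Nat.eq_zero_or_pos k with rfl | hk0
      · exact fun hn => absurd hn (right_head_not_mem_cells hD hrib hmax hk)
      · exact (hrib i).1.right_mem hk0 hk ih'
    exact ⟨hright, below_mem_of_right_mem hD hdisj hrib hk ih' hright⟩

end Tiling

lemma exists_removeRibbon_of_hAdd_succ {e m : ℕ} {l n : YPartition} (h : HAdd e (m + 1) l n) :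
    ∃ n', RemoveRibbon e n n' ∧ HAdd e m l n' := by
  obtain ⟨-, hsub, R, c, hD, hdisj, hrib, -⟩ := h
  obtain ⟨i, hmax⟩ := Finite.exists_max fun j => (c j 0).2
  have hRi : R i ⊆ cells n \ cells l := by rw [hD]; exact Set.subset_iUnion R i
  have hup : ∀ z ∈ R i, IsUpClosedAt n (R i) z := by
    intro z hz
    obtain ⟨k, hk, rfl⟩ := (hrib i).1.mem_iff.1 hz
    exact isUpClosedAt_of_max hD hdisj hrib hmax hk
  obtain ⟨n', hn'⟩ := exists_cells_eq_of_isLowerSet Set.sdiff_subset (isLowerSet_cells_diff hup)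
  refine ⟨n', ⟨hn' ▸ Set.sdiff_subset, c i, ?_⟩,
    ⟨_, ?_, fun j => R (i.succAbove j), fun j => c (i.succAbove j), ?_,
      fun j j' hne => hdisj (Fin.succAbove_right_injective.ne hne), fun j => hrib _, rfl⟩⟩
  · rw [hn', Set.sdiff_sdiff_cancel_left fun x hx => (hRi hx).1]
    exact (hrib i).1
  · rw [hn']
    exact fun x hx => ⟨hsub hx, fun hx' => (hRi hx').2 hx⟩
  · rw [hn', sdiff_right_comm, hD, Fin.iUnion_succAbove_eq_sdiff hdisj]

lemma eq_of_hAdd_zero {e : ℕ} {l n : YPartition} (h : HAdd e 0 l n) : n = l := by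
  obtain ⟨-, hsub, R, -, hD, -⟩ := h
  exact cells_injective (Set.sdiff_eq_empty.1 (hD.trans (Set.iUnion_of_empty R)) |>.antisymm hsub)

lemma HAdd.reflTransGen_removeRibbon {e m : ℕ} {l n : YPartition} (h : HAdd e m l n) :
    Relation.ReflTransGen (RemoveRibbon e) n l := by
  induction m generalizing n with
  | zero => exact eq_of_hAdd_zero h ▸ .refl
  | succ m ih =>
    obtain ⟨n', hnn', hn'⟩ := exists_removeRibbon_of_hAdd_succ h
    exact .head hnn' (ih hn')

lemma RemoveRibbon.ncard_lt {e : ℕ} {n l : YPartition} (he : 0 < e) (h : RemoveRibbon e n l) :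
    (cells l).ncard < (cells n).ncard := by
  obtain ⟨hsub, c, hc⟩ := h
  have hhead := hc.apply_mem he
  exact Set.ncard_lt_ncard ((Set.ssubset_iff_of_subset hsub).2 ⟨_, hhead.1, hhead.2⟩)
    (cells_finite n)

lemma exists_isECoreOf {e : ℕ} (he : 0 < e) (p : YPartition) : ∃ κ, IsECoreOf e κ p :=
  Relation.exists_reflTransGen_normalForm (fun q => (cells q).ncard) (fun _ _ h => h.ncard_lt he) p

end YPartition

open YPartition
/-- if `λ →_{m:e} ν` then `λ` and `ν` have the same `e`-core. -/
theorem hadd_same_core (e m : ℕ) (he : 2 ≤ e) (l n : YPartition)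
    (h : HAdd e m l n) :
    ∃ κ, IsECoreOf e κ l ∧ IsECoreOf e κ n := by
  obtain ⟨κ, hlκ, hκ⟩ := exists_isECoreOf (by omega : 0 < e) l
  exact ⟨κ, ⟨hlκ, hκ⟩, h.reflTransGen_removeRibbon.trans hlκ, hκ⟩
end

section
/- Let λ be a partition of length at most k represented on the e-abacus with k beads, and let x be an addable node of λ of e-residue i corresponding to moving a bead from position β_x on runner r−1 to position β_x+1 on runner r. Then N_i(λ,ν) = A − B, where ν is the partition obtained by adding x, A is the number of beads on runner r−1 at positions greater than β_x whose adjacent position on runner r is empty, and B is the number of beads on runner r at positions whose adjacent position on runner r−1 is empty and which exceed β_x. -/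
/-!
Row `a` of `λ` carries the bead at `bead a = λ_a + (k - 1 - a)`, and these positions strictly
decrease with `a`. Row `a` has an addable node exactly when position `bead a + 1` is empty, and a
removable node exactly when position `bead a - 1` is empty. The residue of the node `(a, c)` is
that of the abacus position `c + (k - 1 - a)`, shifted by `k - 1`; so the addable node of row `a`
has the residue of position `bead a`, and the removable one that of `bead a - 1`. Finally, the
rows above `x` are exactly those whose bead lies beyond `β_x`. Counting nodes row by row thus
counts the beads in `A` and `B`.
-/

open Finset

/-- A partition: a weakly decreasing, eventually-zero sequence of naturals.
`parts i` is the `(i+1)`-st part (0-indexed). -/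
structure AbacusPartition where
  parts : ℕ → ℕ
  antitone : ∀ ⦃i j : ℕ⦄, i ≤ j → parts j ≤ parts i
  eventually_zero : ∃ N, ∀ i, N ≤ i → parts i = 0

namespace AbacusPartition

/-- The length of a partition: the number of nonzero parts. -/
noncomputable def length (l : AbacusPartition) : ℕ :=
  sInf {N | ∀ i, N ≤ i → l.parts i = 0}

/-- The size `|λ|` of a partition: the sum of its parts. -/
noncomputable def size (l : AbacusPartition) : ℕ :=
  ∑ i ∈ Finset.range l.length, l.parts i

/-- The beta-numbers of `l` with respect to `k` beads: `λ_i + k - i` for `i = 1, …, k`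
(here 0-indexed: bead for row `i+1` sits at `parts i + (k - 1 - i)`). -/
def betaSet (l : AbacusPartition) (k : ℕ) : Finset ℕ :=
  (Finset.range k).image fun i => l.parts i + (k - 1 - i)

/-- Dominance order: `l ⊵ m`. -/
def Dominates (l m : AbacusPartition) : Prop :=
  ∀ j, ∑ i ∈ Finset.range j, m.parts i ≤ ∑ i ∈ Finset.range j, l.parts i

/-- Inserting an empty runner before runner `α` into an `e`-abacus: a bead at
position `m*e + r` moves to `m*(e+1) + r` if `r < α` and to `m*(e+1) + r + 1` otherwise. -/
def insRunner (e α p : ℕ) : ℕ :=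
  (p / e) * (e + 1) + p % e + (if p % e < α then 0 else 1)

/-- `lp` is the partition `λ⁺` obtained from `l` by inserting an empty runner at
position `α` into its `e`-abacus with `k` beads. -/
def IsPlus (e α k : ℕ) (l lp : AbacusPartition) : Prop :=
  lp.length ≤ k ∧ lp.betaSet k = (l.betaSet k).image (insRunner e α)

/-- A partition is `d`-regular if no `d` of its nonzero parts are equal. -/
def Regular (d : ℕ) (l : AbacusPartition) : Prop :=
  ¬ ∃ i, l.parts i ≠ 0 ∧ l.parts (i + (d - 1)) = l.parts i

/-- The Young diagram of a partition, as a set of (row, column) cells, 0-indexed. -/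
def cells (l : AbacusPartition) : Set (ℕ × ℕ) := {x | x.2 < l.parts x.1}

/-- `c 0, c 1, …, c (e-1)` are the successive cells of a ribbon: each next cell is
directly below, or directly to the left of, the previous cell. -/
def RibbonSteps (e : ℕ) (c : ℕ → ℕ × ℕ) : Prop :=
  ∀ i, i + 1 < e →
    (c (i + 1) = ((c i).1 + 1, (c i).2)) ∨
    ((c i).2 = (c (i + 1)).2 + 1 ∧ (c (i + 1)).1 = (c i).1)

/-- `R` is an `e`-ribbon with cell enumeration `c` (head `c 0`). -/
def IsRibbonC (e : ℕ) (c : ℕ → ℕ × ℕ) (R : Set (ℕ × ℕ)) : Prop :=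
  R = c '' (Set.Iio e) ∧ Set.InjOn c (Set.Iio e) ∧ RibbonSteps e c

/-- The spin of an `e`-ribbon: the number of vertical steps. -/
def spinOf (e : ℕ) (c : ℕ → ℕ × ℕ) : ℕ :=
  ((Finset.range (e - 1)).filter fun i => (c (i + 1)).1 = (c i).1 + 1).card

/-- The head of the ribbon lies in row 1 or directly below a cell of `l`. -/
def HeadOK (l : AbacusPartition) (c : ℕ → ℕ × ℕ) : Prop :=
  (c 0).1 = 0 ∨ ((c 0).1 - 1, (c 0).2) ∈ cells l

/-- `l` is obtained from `n` by removing a single rim hook (ribbon) of length `e`. -/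
def RemoveRibbon (e : ℕ) (n l : AbacusPartition) : Prop :=
  cells l ⊆ cells n ∧ ∃ c, IsRibbonC e c (cells n \ cells l)

/-- `κ` is the `e`-core of `l`: obtained by repeatedly removing `e`-rim-hooks,
and no further `e`-rim-hook can be removed. -/
def IsECoreOf (e : ℕ) (κ l : AbacusPartition) : Prop :=
  Relation.ReflTransGen (RemoveRibbon e) l κ ∧ ¬ ∃ m, RemoveRibbon e κ m

/-- `l` has `e`-weight `w`: `|l| = |e-core of l| + w * e`. -/
def EWeight (e : ℕ) (l : AbacusPartition) (w : ℕ) : Prop :=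
  ∃ κ, IsECoreOf e κ l ∧ l.size = κ.size + w * e

/-- `λ →_{m:e} ν` with total spin `s`: `[ν] \ [λ]` is a disjoint union of `m`
`e`-ribbons, each of whose heads lies in row 1 or directly below a cell of `λ`,
the sum of whose spins is `s`. -/
def HAddSpin (e m s : ℕ) (l n : AbacusPartition) : Prop :=
  cells l ⊆ cells n ∧
  ∃ (R : Fin m → Set (ℕ × ℕ)) (c : Fin m → ℕ → ℕ × ℕ),
    ((cells n \ cells l) = ⋃ i, R i) ∧
    (Pairwise fun i j => Disjoint (R i) (R j)) ∧
    (∀ i, IsRibbonC e (c i) (R i) ∧ HeadOK l (c i)) ∧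
    s = ∑ i, spinOf e (c i)

/-- `λ →_{m:e} ν`. -/
def HAdd (e m : ℕ) (l n : AbacusPartition) : Prop := ∃ s, HAddSpin e m s l n

/-- `x` is an addable node of `l`. -/
def Addable (l : AbacusPartition) (x : ℕ × ℕ) : Prop :=
  x ∉ cells l ∧ ∃ n : AbacusPartition, cells n = insert x (cells l)

/-- `x` is a removable node of `l`. -/
def Removable (l : AbacusPartition) (x : ℕ × ℕ) : Prop :=
  x ∈ cells l ∧ ∃ n : AbacusPartition, cells n = cells l \ {x}

/-- The `e`-residue of a node `(c,d)`: `d - c mod e`. -/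
def res (e : ℕ) (x : ℕ × ℕ) : ZMod e := (x.2 : ZMod e) - (x.1 : ZMod e)

/-- `N_i(λ,ν) = #{addable i-nodes of λ above x} - #{removable i-nodes of λ above x}`,
where `i = res e x` and `y` is above `x` iff `y.1 < x.1`. -/
noncomputable def Nnum (e : ℕ) (l : AbacusPartition) (x : ℕ × ℕ) : ℤ :=
  ({y | Addable l y ∧ res e y = res e x ∧ y.1 < x.1}.ncard : ℤ) -
  ({y | Removable l y ∧ res e y = res e x ∧ y.1 < x.1}.ncard : ℤ)

end AbacusPartition

open AbacusPartition

namespace AbacusPartition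

lemma parts_eq_zero_of_length_le (l : AbacusPartition) {i : ℕ} (h : l.length ≤ i) :
    l.parts i = 0 :=
  Nat.sInf_mem (s := {N | ∀ j, N ≤ j → l.parts j = 0}) l.eventually_zero i h

lemma mem_cells {l : AbacusPartition} {a c : ℕ} : (a, c) ∈ cells l ↔ c < l.parts a :=
  Iff.rfl

lemma mem_cells_of_le {l : AbacusPartition} {a c a' c' : ℕ} (h : (a, c) ∈ cells l)
    (ha : a' ≤ a) (hc : c' ≤ c) : (a', c') ∈ cells l :=
  mem_cells.2 <| (Nat.lt_of_le_of_lt hc (mem_cells.1 h)).trans_le (l.antitone ha)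

def setRow (l : AbacusPartition) (a m : ℕ) (hnext : l.parts (a + 1) ≤ m)
    (hprev : ∀ i < a, m ≤ l.parts i) : AbacusPartition where
  parts := Function.update l.parts a m
  antitone i j hij := by
    simp only [Function.update_apply]
    split_ifs with hj hi hi
    · exact le_rfl
    · exact hprev i (by omega)
    · exact (l.antitone (show a + 1 ≤ j by omega)).trans hnext
    · exact l.antitone hij
  eventually_zero := by
    obtain ⟨N, hN⟩ := l.eventually_zero
    exact ⟨N + a + 1, fun i hi => by
      rw [Function.update_of_ne (by omega)]
      exact hN i (by omega)⟩

lemma mem_cells_setRow {l : AbacusPartition} {a m : ℕ} {hnext : l.parts (a + 1) ≤ m}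
    {hprev : ∀ i < a, m ≤ l.parts i} {b c : ℕ} :
    (b, c) ∈ cells (l.setRow a m hnext hprev) ↔ c < Function.update l.parts a m b :=
  Iff.rfl

lemma addable_row (l : AbacusPartition) {a : ℕ} (h : a = 0 ∨ l.parts a < l.parts (a - 1)) :
    Addable l (a, l.parts a) := by
  refine ⟨by simp [mem_cells], l.setRow a (l.parts a + 1) ?_ ?_, ?_⟩
  · exact (l.antitone a.le_succ).trans (Nat.le_succ _)
  · intro i hi
    have := l.antitone (show i ≤ a - 1 by omega)
    omega
  · ext ⟨b, c⟩
    rw [mem_cells_setRow, Set.mem_insert_iff, mem_cells, Prod.mk.injEq]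
    rcases eq_or_ne b a with rfl | hb
    · simp only [Function.update_self, true_and]
      omega
    · simp [hb]

lemma removable_row (l : AbacusPartition) {a : ℕ} (h : l.parts (a + 1) < l.parts a) :
    Removable l (a, l.parts a - 1) := by
  refine ⟨mem_cells.2 (by omega), l.setRow a (l.parts a - 1) (by omega) ?_, ?_⟩
  · intro i hi
    have := l.antitone hi.le
    omega
  · ext ⟨b, c⟩
    rw [mem_cells_setRow, Set.mem_sdiff, Set.mem_singleton_iff, mem_cells, Prod.mk.injEq]
    rcases eq_or_ne b a with rfl | hb
    · simp only [Function.update_self, true_and]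
      omega
    · simp [hb]

lemma addable_iff (l : AbacusPartition) (y : ℕ × ℕ) :
    Addable l y ↔ y.2 = l.parts y.1 ∧ (y.1 = 0 ∨ l.parts y.1 < l.parts (y.1 - 1)) := by
  obtain ⟨a, c⟩ := y
  dsimp only
  refine ⟨fun ⟨hy, n, hn⟩ => ?_, fun ⟨hc, h⟩ => hc ▸ l.addable_row h⟩
  have hy' : l.parts a ≤ c := not_lt.1 hy
  have hmem : (a, c) ∈ cells n := hn ▸ Set.mem_insert _ _
  have old : ∀ z ∈ cells n, z ≠ (a, c) → z ∈ cells l := fun z hz hne => by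
    rw [hn] at hz
    exact hz.resolve_left hne
  have hc : c = l.parts a := by
    by_contra hne
    have := old _ (mem_cells_of_le hmem le_rfl hy') (by simp only [ne_eq, Prod.mk.injEq]; omega)
    exact (lt_irrefl _) (mem_cells.1 this)
  refine ⟨hc, ?_⟩
  by_contra! hcon
  have hprev := old _ (mem_cells_of_le hmem (Nat.sub_le a 1) le_rfl) (by simp only [ne_eq, Prod.mk.injEq]; omega)
  have := l.antitone (Nat.sub_le a 1)
  exact absurd (mem_cells.1 hprev) (by omega)

lemma removable_iff (l : AbacusPartition) (y : ℕ × ℕ) :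
    Removable l y ↔ y.2 + 1 = l.parts y.1 ∧ l.parts (y.1 + 1) < l.parts y.1 := by
  obtain ⟨a, c⟩ := y
  dsimp only
  refine ⟨fun ⟨hy, n, hn⟩ => ?_, fun ⟨hc, h⟩ => (by omega : c = l.parts a - 1) ▸ l.removable_row h⟩
  have hy' : c < l.parts a := mem_cells.1 hy
  have hgone : (a, c) ∉ cells n := by simp [hn]
  have kept : ∀ z ∈ cells l, z ≠ (a, c) → z ∈ cells n := fun z hz hne => hn ▸ ⟨hz, hne⟩
  have hc : c + 1 = l.parts a := by
    by_contra hne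
    exact hgone <| mem_cells_of_le (kept (a, c + 1) (mem_cells.2 (by omega)) (by simp))
      le_rfl c.le_succ
  refine ⟨hc, ?_⟩
  by_contra! hcon
  have := l.antitone a.le_succ
  exact hgone <| mem_cells_of_le (kept (a + 1, c) (mem_cells.2 (by omega)) (by simp))
    a.le_succ le_rfl

def bead (l : AbacusPartition) (k a : ℕ) : ℕ := l.parts a + (k - 1 - a)

lemma betaSet_eq_image_bead (l : AbacusPartition) (k : ℕ) :
    l.betaSet k = (range k).image (l.bead k) :=
  rfl

lemma bead_strictAntiOn (l : AbacusPartition) (k : ℕ) : StrictAntiOn (l.bead k) (Set.Iio k) :=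
  fun a _ b hb hab => by
    have := l.antitone hab.le
    simp only [bead, Set.mem_Iio] at *
    omega

lemma bead_lt_bead_iff (l : AbacusPartition) {k a b : ℕ} (ha : a < k) (hb : b < k) :
    l.bead k a < l.bead k b ↔ b < a :=
  (l.bead_strictAntiOn k).lt_iff_gt ha hb

lemma bead_eq_bead_add_one_iff (l : AbacusPartition) {k a b : ℕ} (ha : a < k) (hb : b < k) :
    l.bead k b = l.bead k a + 1 ↔ b + 1 = a ∧ l.parts b = l.parts a := by
  constructor
  · intro h
    have hba : b < a := (l.bead_lt_bead_iff ha hb).1 (by omega)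
    have hab : b + 1 = a := by
      by_contra hne
      have h1 := (l.bead_lt_bead_iff (b := b) (a := b + 1) (by omega) hb).2 b.lt_succ_self
      have h2 := (l.bead_lt_bead_iff (b := b + 1) ha (by omega)).2 (by omega)
      omega
    subst hab
    exact ⟨rfl, by simp only [bead] at h; omega⟩
  · rintro ⟨rfl, h⟩
    simp only [bead]
    omega

lemma mem_betaSet_iff (l : AbacusPartition) {k q : ℕ} :
    q ∈ l.betaSet k ↔ ∃ a < k, l.bead k a = q := by
  simp [betaSet_eq_image_bead]

lemma bead_add_one_mem_betaSet_iff (l : AbacusPartition) {k a : ℕ} (ha : a < k) :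
    l.bead k a + 1 ∈ l.betaSet k ↔ 0 < a ∧ l.parts (a - 1) = l.parts a := by
  rw [mem_betaSet_iff]
  constructor
  · rintro ⟨b, hb, hbeq⟩
    obtain ⟨rfl, heq⟩ := (l.bead_eq_bead_add_one_iff ha hb).1 hbeq
    exact ⟨b.succ_pos, heq⟩
  · rintro ⟨ha0, heq⟩
    exact ⟨a - 1, by omega, (l.bead_eq_bead_add_one_iff ha (by omega)).2 ⟨by omega, heq⟩⟩

lemma bead_sub_one_mem_betaSet_iff (l : AbacusPartition) {k a : ℕ} (ha : a < k)
    (hpos : 1 ≤ l.bead k a) :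
    l.bead k a - 1 ∈ l.betaSet k ↔ a + 1 < k ∧ l.parts (a + 1) = l.parts a := by
  rw [mem_betaSet_iff]
  constructor
  · rintro ⟨b, hb, hbeq⟩
    obtain ⟨rfl, heq⟩ := (l.bead_eq_bead_add_one_iff hb ha).1 (by omega)
    exact ⟨hb, heq.symm⟩
  · rintro ⟨hak, heq⟩
    have := (l.bead_eq_bead_add_one_iff hak ha).2 ⟨rfl, heq.symm⟩
    exact ⟨a + 1, hak, by omega⟩

lemma addable_row_iff_bead (l : AbacusPartition) {k a : ℕ} (ha : a < k) :
    Addable l (a, l.parts a) ↔ l.bead k a + 1 ∉ l.betaSet k := by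
  rw [addable_iff, l.bead_add_one_mem_betaSet_iff ha]
  have := l.antitone (Nat.sub_le a 1)
  simp only [true_and, not_and_or]
  omega

lemma removable_row_iff_bead (l : AbacusPartition) {k a : ℕ} (hl : l.length ≤ k) (ha : a < k) :
    Removable l (a, l.parts a - 1) ↔ 1 ≤ l.bead k a ∧ l.bead k a - 1 ∉ l.betaSet k := by
  rw [removable_iff]
  dsimp only
  have hnext := l.antitone (Nat.le_add_right a 1)
  rcases Nat.lt_or_ge (a + 1) k with hak | hak
  · have hpos := (l.bead_lt_bead_iff hak ha).2 (Nat.lt_add_one a)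
    rw [l.bead_sub_one_mem_betaSet_iff ha (by omega)]
    omega
  · have hzero := l.parts_eq_zero_of_length_le (hl.trans hak)
    have hbead : l.bead k a = l.parts a := by simp only [bead]; omega
    constructor
    · rintro ⟨-, hlt⟩
      rw [l.bead_sub_one_mem_betaSet_iff ha (by omega)]
      omega
    · rintro ⟨h, -⟩
      omega

lemma res_eq_res_iff (e : ℕ) {n a b u v : ℕ} (ha : a ≤ n) (hb : b ≤ n) :
    res e (a, u) = res e (b, v) ↔ (u + (n - a)) % e = (v + (n - b)) % e := by
  rw [← ZMod.natCast_eq_natCast_iff', res, res]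
  push_cast [Nat.cast_sub ha, Nat.cast_sub hb]
  constructor <;> intro h <;> linear_combination h

lemma res_addable_row_eq_iff (l : AbacusPartition) (e : ℕ) {k a : ℕ} {z : ℕ × ℕ} (ha : a < k)
    (hz : z.1 < k) :
    res e (a, l.parts a) = res e z ↔ l.bead k a % e = (z.2 + (k - 1 - z.1)) % e :=
  res_eq_res_iff e (by omega) (by omega)

lemma res_removable_row_eq_iff (l : AbacusPartition) (e : ℕ) {k a : ℕ} {z : ℕ × ℕ} (ha : a < k)
    (hz : z.1 < k) (hrem : Removable l (a, l.parts a - 1)) :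
    res e (a, l.parts a - 1) = res e z ↔ l.bead k a % e = (z.2 + (k - 1 - z.1) + 1) % e := by
  have hpos : 1 ≤ l.parts a := by
    have : l.parts a - 1 + 1 = l.parts a := ((removable_iff l _).1 hrem).1
    omega
  rw [res_eq_res_iff e (n := k - 1) (by omega) (by omega), ← ZMod.natCast_eq_natCast_iff',
    ← ZMod.natCast_eq_natCast_iff', bead, Nat.cast_add (l.parts a - 1), Nat.cast_sub hpos]
  push_cast
  constructor <;> intro h <;> linear_combination h

lemma ncard_eq_card_filter_betaSet (l : AbacusPartition) (k : ℕ) (col : ℕ → ℕ)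
    {S : Set (ℕ × ℕ)} (hS : ∀ y ∈ S, y.1 < k ∧ y.2 = col y.1) (P : ℕ → Prop) [DecidablePred P]
    (hP : ∀ a < k, (a, col a) ∈ S ↔ P (l.bead k a)) :
    S.ncard = ((l.betaSet k).filter P).card := by
  have hS' : S = ↑(((range k).filter (P ∘ l.bead k)).image fun a => (a, col a)) := by
    ext ⟨a, c⟩
    simp only [coe_image, coe_filter, mem_range, Function.comp, Set.mem_image, Set.mem_ofPred_eq,
      Prod.mk.injEq]
    constructor
    · intro hy
      obtain ⟨ha, hc⟩ : a < k ∧ c = col a := hS _ hy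
      exact ⟨a, ⟨ha, (hP a ha).1 (hc ▸ hy)⟩, rfl, hc.symm⟩
    · rintro ⟨a, ⟨ha, hPa⟩, rfl, rfl⟩
      exact (hP a ha).2 hPa
  rw [hS', Set.ncard_coe_finset, card_image_of_injective _ fun a b h => (Prod.mk.inj h).1,
    betaSet_eq_image_bead, filter_image,
    card_image_of_injOn <|
      (l.bead_strictAntiOn k).injOn.mono fun a ha => mem_range.1 (mem_filter.1 ha).1]
  rfl

end AbacusPartition

theorem N_eq_A_sub_B_general (e k : ℕ) (l : AbacusPartition) (hl : l.length ≤ k)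
    (x : ℕ × ℕ) (hx : Addable l x) (hxk : x.1 < k)
    (p : ℕ) (hp : p = x.2 + k - 1 - x.1) :
    Nnum e l x =
      (((l.betaSet k).filter fun q =>
          q % e = p % e ∧ p < q ∧ (q + 1) ∉ l.betaSet k).card : ℤ) -
      (((l.betaSet k).filter fun q =>
          q % e = (p + 1) % e ∧ p < q ∧ 1 ≤ q ∧ (q - 1) ∉ l.betaSet k).card : ℤ) := by
  have hxp : x.2 + (k - 1 - x.1) = p := by omega
  have above : ∀ {a}, a < k → (a < x.1 ↔ p < l.bead k a) := fun ha => by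
    rw [← hxp, ((addable_iff l x).1 hx).1]
    exact (l.bead_lt_bead_iff hxk ha).symm
  rw [Nnum]
  congr 2
  · refine l.ncard_eq_card_filter_betaSet k l.parts (fun y hy => ?_) _ fun a ha => ?_
    · exact ⟨hy.2.2.trans hxk, ((addable_iff l y).1 hy.1).1⟩
    · rw [Set.mem_ofPred_eq, l.addable_row_iff_bead ha, l.res_addable_row_eq_iff e ha hxk, hxp,
        above ha]
      tauto
  · refine l.ncard_eq_card_filter_betaSet k (fun a => l.parts a - 1) (fun y hy => ?_) _
      fun a ha => ?_
    · exact ⟨hy.2.2.trans hxk, Nat.eq_sub_of_add_eq ((removable_iff l y).1 hy.1).1⟩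
    · rw [Set.mem_ofPred_eq, above ha]
      constructor
      · rintro ⟨hrem, hres, habove⟩
        exact ⟨hxp ▸ (l.res_removable_row_eq_iff e ha hxk hrem).1 hres, habove,
          (l.removable_row_iff_bead hl ha).1 hrem⟩
      · rintro ⟨hres, habove, hbead⟩
        have hrem := (l.removable_row_iff_bead hl ha).2 hbead
        exact ⟨hrem, (l.res_removable_row_eq_iff e ha hxk hrem).2 (hxp ▸ hres), habove⟩

/-- `N_i(λ,ν) = A - B` where `x` is the addable `i`-node
corresponding to moving the bead at `β_x = p` to `p + 1`, `A` counts beads on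
the runner of `p` above `p` whose neighbour on the next runner is empty, and `B`
counts beads on the next runner exceeding `p` whose neighbour on the runner of
`p` is empty. -/
theorem N_eq_A_sub_B (e k : ℕ) (he : 2 ≤ e) (l : AbacusPartition) (hl : l.length ≤ k)
    (x : ℕ × ℕ) (hx : Addable l x) (hxk : x.1 < k)
    (p : ℕ) (hp : p = x.2 + k - 1 - x.1) :
    Nnum e l x =
      (((l.betaSet k).filter fun q =>
          q % e = p % e ∧ p < q ∧ (q + 1) ∉ l.betaSet k).card : ℤ) -
      (((l.betaSet k).filter fun q =>
          q % e = (p + 1) % e ∧ p < q ∧ 1 ≤ q ∧ (q - 1) ∉ l.betaSet k).card : ℤ) :=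
  N_eq_A_sub_B_general e k l hl x hx hxk p hp
end

section
/- Let λ be a partition with ℓ(λ) ≤ k. The number of (e+1)-rim-hook removal sequences needed, i.e., the (e+1)-weight of λ⁺, equals the e-weight of λ. In particular if λ and μ are partitions of n of length ≤ k with the same e-core, then λ⁺ and μ⁺ are partitions of the same number with the same (e+1)-core and the same (e+1)-weight. -/
/-!
Encode a partition with at most `k` parts by its `k` beta-numbers, i.e. by `k` beads on an
abacus. Removing an `e`-rim hook is the same as sliding one bead from position `p` to the empty
position `p - e` on its runner of the `e`-abacus. Hence the `e`-core is the abacus with all beads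
slid as far as they go, which is determined by the number of beads on each runner, and every move
lowers the sum of the levels `p / e` of the beads by one. The sum of the beta-numbers, hence the
size, is determined by this level sum and the runner counts, so the `e`-weight is the drop in the
level sum.

Inserting an empty runner keeps the level of every bead and sends the runners of the `e`-abacus
injectively to runners of the `(e + 1)`-abacus. So it preserves level sums and maps settled abaci
to settled abaci and matching runner counts to matching runner counts: the `(e + 1)`-core of `λ⁺`
is `κ⁺` for the `e`-core `κ` of `λ`, and the two weights agree. Partitions of the same size with
the same `e`-core have the same runner counts and level sum, hence so do their images.
-/

open Finset

namespace YPartition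

theorem ext_parts {l m : YPartition} (h : l.parts = m.parts) : l = m := by
  cases l; cases m; cases h; rfl

theorem parts_eq_zero {l : YPartition} {i : ℕ} (h : l.length ≤ i) : l.parts i = 0 :=
  Nat.sInf_mem (s := {N | ∀ i, N ≤ i → l.parts i = 0}) l.eventually_zero i h

theorem length_le_iff {l : YPartition} {N : ℕ} :
    l.length ≤ N ↔ ∀ i, N ≤ i → l.parts i = 0 :=
  ⟨fun h _ hi => parts_eq_zero (h.trans hi), fun h => Nat.sInf_le h⟩

theorem length_mono {l n : YPartition} (h : ∀ i, l.parts i ≤ n.parts i) :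
    l.length ≤ n.length :=
  length_le_iff.2 fun i hi => Nat.le_zero.1 ((h i).trans (parts_eq_zero hi).le)

theorem size_eq_sum_range {l : YPartition} {K : ℕ} (h : l.length ≤ K) :
    l.size = ∑ i ∈ range K, l.parts i :=
  sum_subset (range_subset_range.2 h) fun _ _ hi =>
    parts_eq_zero (not_lt.1 (mem_range.not.1 hi))

theorem cells_subset_iff {l n : YPartition} :
    cells l ⊆ cells n ↔ ∀ i, l.parts i ≤ n.parts i := by
  refine ⟨fun h i => ?_, fun h x hx => lt_of_lt_of_le hx (h x.1)⟩
  by_contra hc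
  exact lt_irrefl (n.parts i) (h (show (i, n.parts i) ∈ cells l from not_le.1 hc))

theorem mem_cells_sdiff {l n : YPartition} {x : ℕ × ℕ} :
    x ∈ cells n \ cells l ↔ l.parts x.1 ≤ x.2 ∧ x.2 < n.parts x.1 := by
  simp only [cells, Set.mem_sdiff, Set.mem_ofPred_eq, not_lt, and_comm]

theorem cells_eq_coe (l : YPartition) :
    cells l = ↑((range l.length).biUnion fun i => {i} ×ˢ range (l.parts i)) := by
  ext ⟨i, j⟩
  simp only [cells, Set.mem_ofPred_eq, coe_biUnion, coe_range, Set.mem_Iio, coe_product,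
    coe_singleton, Set.mem_iUnion, Set.mem_prod, Set.mem_singleton_iff, exists_prop]
  constructor
  · intro h
    exact ⟨i, not_le.1 fun hi => by simp [parts_eq_zero hi] at h, rfl, h⟩
  · rintro ⟨_, _, rfl, h⟩
    exact h

theorem ncard_cells (l : YPartition) : (cells l).ncard = l.size := by
  rw [cells_eq_coe, Set.ncard_coe_finset, card_biUnion]
  · simp [size]
  · intro i _ j _ hij
    simp only [disjoint_left, mem_product, mem_singleton]
    rintro x ⟨rfl, -⟩ ⟨rfl, -⟩
    exact hij rfl

theorem finite_cells (l : YPartition) : (cells l).Finite := by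
  rw [cells_eq_coe]
  exact finite_toSet _

theorem ncard_cells_sdiff {l n : YPartition} (h : cells l ⊆ cells n) :
    (cells n \ cells l).ncard = n.size - l.size := by
  rw [Set.ncard_sdiff h (finite_cells l), ncard_cells, ncard_cells]

def BeadMove (e : ℕ) (B B' : Finset ℕ) : Prop :=
  ∃ p ∈ B, e ≤ p ∧ p - e ∉ B ∧ B' = insert (p - e) (B.erase p)

def beadCount (e r : ℕ) (B : Finset ℕ) : ℕ := #(B.filter fun p => p % e = r)

def levelSum (e : ℕ) (B : Finset ℕ) : ℕ := ∑ p ∈ B, p / e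

def IsSettled (e : ℕ) (B : Finset ℕ) : Prop := ∀ p ∈ B, e ≤ p → p - e ∈ B

section Abacus

variable {e : ℕ} {B B' C : Finset ℕ}

theorem BeadMove.beadCount_eq (h : BeadMove e B B') (r : ℕ) :
    beadCount e r B' = beadCount e r B := by
  obtain ⟨p, hp, hep, hpe, rfl⟩ := h
  have hmod : (p - e) % e = p % e := by
    rw [← Nat.sub_add_cancel hep, Nat.add_mod_right, Nat.sub_add_cancel hep]
  unfold beadCount
  rw [filter_insert, filter_erase]
  by_cases hr : p % e = r
  · have hpr : p ∈ B.filter fun q => q % e = r := mem_filter.2 ⟨hp, hr⟩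
    rw [if_pos (hmod.trans hr),
      card_insert_of_notMem fun h => hpe (mem_filter.1 (mem_of_mem_erase h)).1,
      card_erase_add_one hpr]
  · rw [if_neg (hmod.trans_ne hr),
      erase_eq_of_notMem (s := B.filter fun q => q % e = r) fun h => hr (mem_filter.1 h).2]

theorem BeadMove.levelSum_eq (he : 0 < e) (h : BeadMove e B B') :
    levelSum e B = levelSum e B' + 1 := by
  obtain ⟨p, hp, hep, hpe, rfl⟩ := h
  have hdiv : (p - e) / e + 1 = p / e := by
    rw [← Nat.add_div_right _ he, Nat.sub_add_cancel hep]
  unfold levelSum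
  rw [sum_insert fun h => hpe (mem_of_mem_erase h), ← add_sum_erase _ _ hp, ← hdiv]
  ring

theorem IsSettled.mem_of_le (hB : IsSettled e B) {p q : ℕ} (hq : q ∈ B) (hpq : p ≤ q)
    (hmod : p % e = q % e) : p ∈ B := by
  have key : ∀ d, p + e * d ∈ B → p ∈ B := by
    intro d
    induction d with
    | zero => simp
    | succ d ih =>
      intro h
      rw [mul_add_one, ← add_assoc] at h
      exact ih (by simpa using hB _ h (Nat.le_add_left e _))
  obtain ⟨d, hd⟩ := (Nat.modEq_iff_dvd' hpq).1 hmod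
  exact key d (by rwa [← hd, Nat.add_sub_cancel' hpq])

theorem IsSettled.mem_iff (he : 0 < e) (hB : IsSettled e B) (p : ℕ) :
    p ∈ B ↔ p / e < beadCount e (p % e) B := by
  have hinj : Function.Injective fun j => p % e + e * j :=
    (add_right_injective _).comp (mul_right_injective₀ he.ne')
  have hrunner : ∀ j, (p % e + e * j) % e = p % e := fun j => by
    rw [Nat.add_mul_mod_self_left, Nat.mod_mod]
  have hp := Nat.mod_add_div p e
  constructor
  · intro hpB
    have hsub : (range (p / e + 1)).image (fun j => p % e + e * j) ⊆
        B.filter fun q => q % e = p % e := by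
      intro q hq
      obtain ⟨j, hj, rfl⟩ := mem_image.1 hq
      have : e * j ≤ e * (p / e) := Nat.mul_le_mul_left e (Nat.lt_succ_iff.1 (mem_range.1 hj))
      exact mem_filter.2 ⟨hB.mem_of_le hpB (by omega) (hrunner j), hrunner j⟩
    have := card_le_card hsub
    rwa [card_image_of_injective _ hinj, card_range] at this
  · intro hlt
    by_contra hpB
    have hsub : (B.filter fun q => q % e = p % e) ⊆
        (range (p / e)).image (fun j => p % e + e * j) := by
      intro q hq
      obtain ⟨hqB, hqr⟩ := mem_filter.1 hq
      have hqp : q < p := not_le.1 fun hpq => hpB (hB.mem_of_le hqB hpq hqr.symm)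
      have hq := Nat.mod_add_div q e
      have hdiv : q / e < p / e := Nat.lt_of_mul_lt_mul_left (a := e) (by omega)
      exact mem_image.2 ⟨q / e, mem_range.2 hdiv, by omega⟩
    have := card_le_card hsub
    rw [card_image_of_injective _ hinj, card_range] at this
    exact absurd hlt (not_lt.2 this)

theorem IsSettled.eq_of_beadCount_eq (he : 0 < e) (hB : IsSettled e B) (hC : IsSettled e C)
    (h : ∀ r, beadCount e r B = beadCount e r C) : B = C := by
  ext p
  rw [hB.mem_iff he, hC.mem_iff he, h]

theorem card_filter_mod_eq_sum (he : 0 < e) (P : ℕ → Prop) [DecidablePred P] (B : Finset ℕ) :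
    #(B.filter fun p => P (p % e)) = ∑ r ∈ (range e).filter P, beadCount e r B := by
  rw [card_eq_sum_card_fiberwise (f := (· % e)) (t := (range e).filter P)]
  · refine sum_congr rfl fun r hr => ?_
    rw [beadCount, filter_filter]
    exact congrArg card
      (filter_congr fun p _ => and_iff_right_of_imp fun h => h ▸ (mem_filter.1 hr).2)
  · intro p hp
    exact mem_filter.2 ⟨mem_range.2 (Nat.mod_lt p he), (mem_filter.1 hp).2⟩

theorem sum_eq_mul_levelSum_add (he : 0 < e) (B : Finset ℕ) :
    ∑ p ∈ B, p = e * levelSum e B + ∑ r ∈ range e, r * beadCount e r B := by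
  have hres : ∑ p ∈ B, p % e = ∑ r ∈ range e, r * beadCount e r B := by
    rw [← sum_fiberwise_of_maps_to (g := (· % e)) (t := range e)
      fun p _ => mem_range.2 (Nat.mod_lt p he)]
    refine sum_congr rfl fun r _ => ?_
    rw [sum_congr rfl fun p hp => (mem_filter.1 hp).2, sum_const, smul_eq_mul, mul_comm, beadCount]
  rw [levelSum, mul_sum, ← hres, ← sum_add_distrib]
  exact sum_congr rfl fun p _ => (Nat.div_add_mod p e).symm

end Abacus

def beta (l : YPartition) (k i : ℕ) : ℕ := l.parts i + (k - 1 - i)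

section Beta

variable {l m : YPartition} {k : ℕ}

theorem beta_lt_beta {i j : ℕ} (hij : i < j) (hj : j < k) : l.beta k j < l.beta k i := by
  have := l.antitone hij.le
  unfold beta
  omega

theorem beta_strictAntiOn : StrictAntiOn (l.beta k) (Set.Iio k) :=
  fun _ _ _ hj hij => beta_lt_beta hij hj

theorem betaSet_eq_image : l.betaSet k = (range k).image (l.beta k) := rfl

theorem mem_betaSet {p : ℕ} : p ∈ l.betaSet k ↔ ∃ i < k, l.beta k i = p := by
  simp [betaSet, beta]

theorem beta_mem_betaSet {i : ℕ} (hi : i < k) : l.beta k i ∈ l.betaSet k :=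
  mem_betaSet.2 ⟨i, hi, rfl⟩

theorem card_betaSet (l : YPartition) (k : ℕ) : #(l.betaSet k) = k := by
  rw [betaSet_eq_image, card_image_of_injOn (by simpa using beta_strictAntiOn.injOn), card_range]

theorem sum_betaSet (hl : l.length ≤ k) :
    ∑ p ∈ l.betaSet k, p = l.size + ∑ i ∈ range k, (k - 1 - i) := by
  rw [betaSet_eq_image, sum_image (by simpa using beta_strictAntiOn.injOn), size_eq_sum_range hl,
    ← sum_add_distrib]
  rfl

theorem eq_of_betaSet_eq (hl : l.length ≤ k) (hm : m.length ≤ k)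
    (h : l.betaSet k = m.betaSet k) : l = m := by
  have hsorted : ∀ n : YPartition, n.betaSet k = l.betaSet k →
      (fun j : Fin k => n.beta k (k - 1 - j)) = (l.betaSet k).orderEmbOfFin (card_betaSet l k) :=
    fun n hn => orderEmbOfFin_unique _ (fun j => hn ▸ beta_mem_betaSet (by omega))
      fun a b hab => beta_lt_beta (by omega) (by omega)
  have hbeta : ∀ i < k, l.beta k i = m.beta k i := fun i hi => by
    have := congrFun ((hsorted l rfl).trans (hsorted m h.symm).symm) ⟨k - 1 - i, by omega⟩
    simpa [show k - 1 - (k - 1 - i) = i by omega] using this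
  refine ext_parts (funext fun i => ?_)
  rcases lt_or_ge i k with hi | hi
  · have := hbeta i hi
    unfold beta at this
    omega
  · rw [parts_eq_zero (hl.trans hi), parts_eq_zero (hm.trans hi)]

theorem size_eq_add_mul_iff {e : ℕ} (he : 0 < e) (hl : l.length ≤ k) (hm : m.length ≤ k)
    (hcount : ∀ r, beadCount e r (l.betaSet k) = beadCount e r (m.betaSet k)) (w : ℕ) :
    l.size = m.size + w * e ↔ levelSum e (l.betaSet k) = levelSum e (m.betaSet k) + w := by
  have hl' := (sum_betaSet hl).symm.trans (sum_eq_mul_levelSum_add he (l.betaSet k))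
  have hm' := (sum_betaSet hm).symm.trans (sum_eq_mul_levelSum_add he (m.betaSet k))
  simp only [hcount] at hl'
  constructor
  · intro h
    apply Nat.eq_of_mul_eq_mul_left he
    linarith
  · intro h
    rw [h] at hl'
    linarith

end Beta

section Ribbon

variable {e : ℕ} {c : ℕ → ℕ × ℕ}

theorem RibbonSteps.row_le_row (h : RibbonSteps e c) {s t : ℕ} (hst : s ≤ t) (ht : t < e) :
    (c s).1 ≤ (c t).1 := by
  induction t, hst using Nat.le_induction with
  | base => exact le_rfl
  | succ t _ ih =>
    have := ih (by omega)
    rcases h t ht with h' | h'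
    · rw [h']
      exact this.trans (Nat.le_succ _)
    · rw [h'.2]
      exact this

/-- Every step of a ribbon lowers the content `column - row` by one. -/
theorem RibbonSteps.content (h : RibbonSteps e c) {s t : ℕ} (hst : s ≤ t) (ht : t < e) :
    (c t).2 + (t - s) + (c s).1 = (c s).2 + (c t).1 := by
  induction t, hst using Nat.le_induction with
  | base => simp [add_comm]
  | succ t hst ih =>
    have := ih (by omega)
    rcases h t ht with h' | h'
    · rw [h']
      dsimp only
      omega
    · omega

variable {n l : YPartition}

theorem ribbon_cell_iff (hR : cells n \ cells l = c '' Set.Iio e) {x : ℕ × ℕ} :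
    l.parts x.1 ≤ x.2 ∧ x.2 < n.parts x.1 ↔ ∃ t < e, c t = x := by
  rw [← mem_cells_sdiff, hR]
  simp

theorem ribbon_cell (hR : cells n \ cells l = c '' Set.Iio e) {t : ℕ} (ht : t < e) :
    l.parts (c t).1 ≤ (c t).2 ∧ (c t).2 < n.parts (c t).1 :=
  (ribbon_cell_iff hR).2 ⟨t, ht, rfl⟩

theorem ribbon_head_add_one (hR : cells n \ cells l = c '' Set.Iio e) (hsteps : RibbonSteps e c)
    (he : 0 < e) : (c 0).2 + 1 = n.parts (c 0).1 := by
  have h0 := ribbon_cell hR he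
  obtain ⟨s, hs, hcs⟩ := (ribbon_cell_iff hR (x := ((c 0).1, n.parts (c 0).1 - 1))).1
    ⟨by dsimp only; omega, by dsimp only; omega⟩
  have := hsteps.content (Nat.zero_le s) hs
  rw [hcs] at this
  dsimp only at this
  omega

theorem ribbon_tail (hR : cells n \ cells l = c '' Set.Iio e) (hsteps : RibbonSteps e c)
    (he : 0 < e) : (c (e - 1)).2 = l.parts (c (e - 1)).1 := by
  have h1 := ribbon_cell hR (show e - 1 < e by omega)
  obtain ⟨m, hm, hcm⟩ := (ribbon_cell_iff hR (x := ((c (e - 1)).1, l.parts (c (e - 1)).1))).1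
    ⟨le_rfl, by dsimp only; omega⟩
  have := hsteps.content (show m ≤ e - 1 by omega) (by omega)
  rw [hcm] at this
  dsimp only at this
  omega

/-- The leftmost cell of row `i` is followed by a step down, into the rightmost cell of
row `i + 1`. -/
theorem ribbon_parts_add_one (hR : cells n \ cells l = c '' Set.Iio e) (hsteps : RibbonSteps e c)
    {i : ℕ} (hib : i < (c (e - 1)).1) (hi : l.parts i < n.parts i) :
    l.parts i + 1 = n.parts (i + 1) := by
  obtain ⟨m, hm, hcm⟩ := (ribbon_cell_iff hR (x := (i, l.parts i))).1 ⟨le_rfl, hi⟩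
  have hm1 : m + 1 < e := by
    by_contra hc
    rw [show e - 1 = m by omega, hcm] at hib
    exact lt_irrefl _ hib
  have hdown : c (m + 1) = (i + 1, l.parts i) := by
    have := (ribbon_cell hR hm1).1
    rcases hsteps m hm1 with h' | h'
    · rw [h', hcm]
    · rw [h'.2, hcm] at this
      rw [hcm] at h'
      dsimp only at h' this
      omega
  have hnext := ribbon_cell hR hm1
  rw [hdown] at hnext
  dsimp only at hnext
  obtain ⟨s, hs, hcs⟩ := (ribbon_cell_iff hR (x := (i + 1, n.parts (i + 1) - 1))).1
    ⟨by dsimp only; omega, by dsimp only; omega⟩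
  have hms : m + 1 ≤ s := by
    by_contra hc
    have := hsteps.row_le_row (show s ≤ m by omega) hm
    rw [hcs, hcm] at this
    dsimp only at this
    omega
  have := hsteps.content hms hs
  rw [hcs, hdown] at this
  dsimp only at this
  omega

end Ribbon

/-- `[n] \ [l]` is a rim hook of size `e` in the rows `a, …, r`: the leftmost cell of each of
its rows but the last lies directly above the rightmost cell of the next one. -/
structure RibbonRows (e : ℕ) (n l : YPartition) (a r : ℕ) : Prop where
  le : a ≤ r
  lo : ∀ i < a, l.parts i = n.parts i
  hi : ∀ i, r < i → l.parts i = n.parts i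
  mid : ∀ i, a ≤ i → i < r → l.parts i + 1 = n.parts (i + 1)
  last : l.parts r + e = n.parts a + (r - a)

theorem RemoveRibbon.exists_ribbonRows {e : ℕ} {n l : YPartition} (he : 0 < e)
    (h : RemoveRibbon e n l) : ∃ a r, RibbonRows e n l a r := by
  obtain ⟨hsub, c, hR, -, hsteps⟩ := h
  have hrow : ∀ t < e, (c 0).1 ≤ (c t).1 ∧ (c t).1 ≤ (c (e - 1)).1 := fun t ht =>
    ⟨hsteps.row_le_row (Nat.zero_le t) ht, hsteps.row_le_row (by omega) (by omega)⟩
  have hab := (hrow 0 he).2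
  have hne : ∀ i, (c 0).1 ≤ i → i ≤ (c (e - 1)).1 → l.parts i < n.parts i := by
    intro i hai
    induction i, hai using Nat.le_induction with
    | base => exact fun _ => lt_of_le_of_lt (ribbon_cell hR he).1 (ribbon_cell hR he).2
    | succ i _ ih =>
      intro hib
      have := ribbon_parts_add_one hR hsteps (by omega) (ih (by omega))
      have := l.antitone (show i ≤ i + 1 by omega)
      omega
  have hout : ∀ i, l.parts i ≠ n.parts i → (c 0).1 ≤ i ∧ i ≤ (c (e - 1)).1 := by
    intro i hi
    obtain ⟨t, ht, hct⟩ := (ribbon_cell_iff hR (x := (i, l.parts i))).1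
      ⟨le_rfl, lt_of_le_of_ne (cells_subset_iff.1 hsub i) hi⟩
    simpa [hct] using hrow t ht
  refine ⟨(c 0).1, (c (e - 1)).1, hab, fun i hi => ?_, fun i hi => ?_,
    fun i hai hib => ribbon_parts_add_one hR hsteps hib (hne i hai hib.le), ?_⟩
  · by_contra hc
    exact absurd (hout i hc).1 (not_le.2 hi)
  · by_contra hc
    exact absurd (hout i hc).2 (not_le.2 hi)
  · have := hsteps.content (Nat.zero_le (e - 1)) (by omega)
    have := ribbon_head_add_one hR hsteps he
    have := ribbon_tail hR hsteps he
    omega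

/-- A step of the walk through a rim hook: down from the leftmost removed cell of a row, left
from any other cell. -/
def hookStep (l : YPartition) (x : ℕ × ℕ) : ℕ × ℕ :=
  if x.2 = l.parts x.1 then (x.1 + 1, x.2) else (x.1, x.2 - 1)

namespace RibbonRows

variable {e : ℕ} {n l : YPartition} {a r : ℕ}

theorem parts_lt (h : RibbonRows e n l a r) (he : 0 < e) {i : ℕ} (hai : a ≤ i) (hir : i ≤ r) :
    l.parts i < n.parts i := by
  rcases hir.lt_or_eq with hir | rfl
  · have := h.mid i hai hir
    have := n.antitone (show i ≤ i + 1 by omega)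
    omega
  · rcases hai.lt_or_eq with hai | rfl
    · have := h.mid (i - 1) (by omega) (by omega)
      rw [Nat.sub_add_cancel (by omega)] at this
      have := l.antitone (Nat.sub_le i 1)
      omega
    · have := h.last
      omega

theorem parts_le (h : RibbonRows e n l a r) (he : 0 < e) (i : ℕ) : l.parts i ≤ n.parts i := by
  rcases lt_or_ge i a with hia | hai
  · exact (h.lo i hia).le
  rcases le_or_gt i r with hir | hri
  · exact (h.parts_lt he hai hir).le
  · exact (h.hi i hri).le

theorem lt_length (h : RibbonRows e n l a r) (he : 0 < e) : r < n.length := by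
  by_contra hc
  have := h.parts_lt he h.le le_rfl
  rw [parts_eq_zero (not_lt.1 hc)] at this
  exact Nat.not_lt_zero _ this

theorem beta_of_lt (h : RibbonRows e n l a r) {k i : ℕ} (hi : i < a) :
    l.beta k i = n.beta k i := by
  rw [beta, h.lo i hi, beta]

theorem beta_of_gt (h : RibbonRows e n l a r) {k i : ℕ} (hi : r < i) :
    l.beta k i = n.beta k i := by
  rw [beta, h.hi i hi, beta]

theorem beta_of_mem_Ico (h : RibbonRows e n l a r) {k i : ℕ} (hrk : r < k) (hai : a ≤ i)
    (hir : i < r) : l.beta k i = n.beta k (i + 1) := by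
  have := h.mid i hai hir
  simp only [beta]
  omega

theorem beta_last (h : RibbonRows e n l a r) {k : ℕ} (hrk : r < k) :
    l.beta k r + e = n.beta k a := by
  have := h.last
  have := h.le
  simp only [beta]
  omega

theorem betaSet_eq (h : RibbonRows e n l a r) (he : 0 < e) {k : ℕ} (hk : n.length ≤ k) :
    l.betaSet k = insert (n.beta k a - e) ((n.betaSet k).erase (n.beta k a)) := by
  have har := h.le
  have hrk : r < k := (h.lt_length he).trans_le hk
  have hlast := h.beta_last hrk
  ext q
  rw [mem_betaSet, mem_insert, mem_erase, mem_betaSet]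
  constructor
  · rintro ⟨i, hik, rfl⟩
    rcases lt_or_ge i a with hia | hai
    · rw [h.beta_of_lt hia]
      exact Or.inr ⟨(beta_lt_beta hia (by omega)).ne', i, hik, rfl⟩
    rcases lt_trichotomy i r with hir | rfl | hri
    · rw [h.beta_of_mem_Ico hrk hai hir]
      exact Or.inr ⟨(beta_lt_beta (by omega) (by omega)).ne, i + 1, by omega, rfl⟩
    · exact Or.inl (by omega)
    · rw [h.beta_of_gt hri]
      exact Or.inr ⟨(beta_lt_beta (by omega) hik).ne, i, hik, rfl⟩
  · rintro (rfl | ⟨hqa, i, hik, rfl⟩)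
    · exact ⟨r, hrk, by omega⟩
    rcases lt_or_ge i a with hia | hai
    · exact ⟨i, hik, h.beta_of_lt hia⟩
    rcases hai.lt_or_eq with hai | rfl
    · rcases le_or_gt i r with hir | hri
      · refine ⟨i - 1, by omega, ?_⟩
        rw [h.beta_of_mem_Ico hrk (by omega) (by omega), Nat.sub_add_cancel (by omega)]
      · exact ⟨i, hik, h.beta_of_gt hri⟩
    · exact absurd rfl hqa

theorem beadMove (h : RibbonRows e n l a r) (he : 0 < e) {k : ℕ} (hk : n.length ≤ k) :
    BeadMove e (n.betaSet k) (l.betaSet k) := by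
  have hak : a < k := (h.le.trans_lt (h.lt_length he)).trans_le hk
  have hβ := h.betaSet_eq he hk
  have hlast := h.beta_last ((h.lt_length he).trans_le hk)
  refine ⟨n.beta k a, beta_mem_betaSet hak, by omega, fun hmem => ?_, hβ⟩
  have hcard := card_betaSet l k
  rw [hβ, insert_eq_of_mem (mem_erase.2 ⟨by omega, hmem⟩),
    card_erase_of_mem (beta_mem_betaSet hak), card_betaSet] at hcard
  omega

theorem size_eq (h : RibbonRows e n l a r) (he : 0 < e) : n.size = l.size + e := by
  have hmove := h.beadMove he le_rfl
  simpa using (size_eq_add_mul_iff he le_rfl (length_mono (h.parts_le he))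
    (fun r => (hmove.beadCount_eq r).symm) 1).2 (hmove.levelSum_eq he)

theorem hookStep_iterate (h : RibbonRows e n l a r) (he : 0 < e) {t : ℕ} (ht : t < e) :
    let x := (hookStep l)^[t] (a, n.parts a - 1)
    a ≤ x.1 ∧ x.1 ≤ r ∧ l.parts x.1 ≤ x.2 ∧ x.2 < n.parts x.1 ∧
      x.2 + a + t + 1 = n.parts a + x.1 := by
  induction t with
  | zero =>
    have := h.parts_lt he le_rfl h.le
    simp only [Function.iterate_zero_apply]
    exact ⟨le_rfl, h.le, by omega, by omega, by omega⟩
  | succ t ih =>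
    obtain ⟨h1, h2, h3, h4, h5⟩ := ih (by omega)
    rw [Function.iterate_succ_apply']
    set x := (hookStep l)^[t] (a, n.parts a - 1)
    unfold hookStep
    split_ifs with hx
    · have hxr : x.1 < r := by
        refine lt_of_le_of_ne h2 fun hxr => ?_
        have := h.last
        rw [hxr] at hx
        omega
      have := h.mid x.1 h1 hxr
      have := l.antitone (show x.1 ≤ x.1 + 1 by omega)
      dsimp only
      omega
    · dsimp only
      omega

theorem removeRibbon (h : RibbonRows e n l a r) (he : 0 < e) : RemoveRibbon e n l := by
  set c := fun t => (hookStep l)^[t] (a, n.parts a - 1)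
  have hc : ∀ t < e, _ := fun t ht => h.hookStep_iterate he ht
  have hinj : Set.InjOn c (Set.Iio e) := fun s hs t ht hst => by
    have h1 := (hc s hs).2.2.2.2
    have h2 := (hc t ht).2.2.2.2
    simp only [c] at hst
    rw [hst] at h1
    omega
  have hsub : cells l ⊆ cells n := cells_subset_iff.2 (h.parts_le he)
  refine ⟨hsub, c, (Set.eq_of_subset_of_ncard_le ?_ ?_ (finite_cells n).sdiff).symm, hinj, ?_⟩
  · rintro _ ⟨t, ht, rfl⟩
    have := hc t ht
    exact mem_cells_sdiff.2 ⟨this.2.2.1, this.2.2.2.1⟩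
  · rw [ncard_cells_sdiff hsub, h.size_eq he, hinj.ncard_image, ← coe_range,
      Set.ncard_coe_finset, card_range]
    omega
  · intro t ht
    simp only [c, Function.iterate_succ_apply', hookStep]
    split_ifs with hx
    · exact Or.inl rfl
    · have := (hc t (by omega)).2.2.1
      exact Or.inr ⟨by dsimp only; omega, rfl⟩

end RibbonRows

theorem exists_ribbonRows {e : ℕ} {n : YPartition} {a r : ℕ} (har : a ≤ r)
    (hr : n.parts a + (r - a) < n.parts r + e) (hr1 : n.parts (r + 1) + e ≤ n.parts a + (r - a)) :
    ∃ l, RibbonRows e n l a r := by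
  set f : ℕ → ℕ := fun i =>
    if i < a ∨ r < i then n.parts i else if i < r then n.parts (i + 1) - 1
    else n.parts a + (r - a) - e with hf
  have hstep : ∀ i, f (i + 1) ≤ f i := by
    intro i
    have h1 := n.antitone (show i ≤ i + 1 by omega)
    have h2 := n.antitone (show i + 1 ≤ i + 1 + 1 by omega)
    simp only [hf]
    rcases lt_trichotomy (i + 1) a with hia | rfl | hia
    · split_ifs <;> omega
    · rcases har.lt_or_eq with har | rfl <;> split_ifs <;> omega
    rcases lt_trichotomy (i + 1) r with hir | rfl | hri
    · split_ifs <;> omega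
    · split_ifs <;> omega
    · rcases (Nat.lt_succ_iff.1 hri).lt_or_eq with hri | rfl <;> split_ifs <;> omega
  refine ⟨⟨f, antitone_nat_of_succ_le hstep, max n.length (r + 1), fun i hi => ?_⟩,
    har, fun i hi => if_pos (Or.inl hi), fun i hi => if_pos (Or.inr hi), fun i hai hir => ?_, ?_⟩
  · simp only [hf]
    rw [if_pos (Or.inr (by omega))]
    exact parts_eq_zero (by omega)
  · have := n.antitone (show i + 1 ≤ r by omega)
    show f i + 1 = _
    simp only [hf]
    rw [if_neg (by omega), if_pos hir]
    omega
  · show f r + e = _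
    simp only [hf]
    rw [if_neg (by omega), if_neg (by omega)]
    omega

theorem exists_ribbonRows_of_beadMove {e k : ℕ} {n : YPartition} (he : 0 < e)
    (hn : n.length ≤ k) {p : ℕ} (hp : p ∈ n.betaSet k) (hep : e ≤ p)
    (hpe : p - e ∉ n.betaSet k) :
    ∃ a r l, n.beta k a = p ∧ RibbonRows e n l a r := by
  obtain ⟨a, hak, rfl⟩ := mem_betaSet.1 hp
  -- the hook ends in the last row `r` whose bead lies above the position `p - e`
  have ha : n.beta k a - e < n.beta k a := by omega
  have hr := Nat.findGreatest_spec (P := fun i => n.beta k a - e < n.beta k i) (n := k - 1)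
    (by omega) ha
  have har := Nat.le_findGreatest (P := fun i => n.beta k a - e < n.beta k i) (n := k - 1)
    (by omega) ha
  have hrk := Nat.findGreatest_le (P := fun i => n.beta k a - e < n.beta k i) (k - 1)
  have hgt := fun i => Nat.findGreatest_is_greatest (P := fun i => n.beta k a - e < n.beta k i)
    (k := i) (n := k - 1)
  generalize Nat.findGreatest (fun i => n.beta k a - e < n.beta k i) (k - 1) = r at hr har hrk hgt
  have hnext : n.parts (r + 1) + e ≤ n.parts a + (r - a) := by
    rcases lt_or_ge (r + 1) k with hr1 | hr1
    · have h1 := hgt (r + 1) (by omega) (by omega)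
      have h2 : n.beta k (r + 1) ≠ n.beta k a - e := fun h => hpe (h ▸ beta_mem_betaSet hr1)
      simp only [not_lt] at h1
      unfold beta at h1 h2 hep
      omega
    · rw [parts_eq_zero (hn.trans hr1)]
      unfold beta at hep
      omega
  obtain ⟨l, hl⟩ := exists_ribbonRows har (by unfold beta at hr; omega) hnext
  exact ⟨a, r, l, rfl, hl⟩

variable {e k : ℕ} {n l κ : YPartition}

theorem RemoveRibbon.beadMove (he : 0 < e) (hn : n.length ≤ k) (h : RemoveRibbon e n l) :
    l.length ≤ k ∧ BeadMove e (n.betaSet k) (l.betaSet k) := by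
  obtain ⟨a, r, hrows⟩ := h.exists_ribbonRows he
  exact ⟨(length_mono (hrows.parts_le he)).trans hn, hrows.beadMove he hn⟩

theorem exists_removeRibbon_of_beadMove (he : 0 < e) (hn : n.length ≤ k) {B : Finset ℕ}
    (h : BeadMove e (n.betaSet k) B) : ∃ l, RemoveRibbon e n l ∧ l.betaSet k = B := by
  obtain ⟨p, hp, hep, hpe, rfl⟩ := h
  obtain ⟨a, r, l, rfl, hrows⟩ := exists_ribbonRows_of_beadMove he hn hp hep hpe
  exact ⟨l, hrows.removeRibbon he, hrows.betaSet_eq he hn⟩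

theorem isSettled_iff_not_removeRibbon (he : 0 < e) (hn : n.length ≤ k) :
    IsSettled e (n.betaSet k) ↔ ¬ ∃ l, RemoveRibbon e n l := by
  constructor
  · rintro hS ⟨l, hl⟩
    obtain ⟨p, hp, hep, hpe, -⟩ := (hl.beadMove he hn).2
    exact hpe (hS p hp hep)
  · intro h p hp hep
    by_contra hpe
    obtain ⟨l, hl, -⟩ := exists_removeRibbon_of_beadMove he hn ⟨p, hp, hep, hpe, rfl⟩
    exact h ⟨l, hl⟩

theorem exists_isECoreOf_s16 (he : 0 < e) (hn : n.length ≤ k) : ∃ κ, IsECoreOf e κ n := by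
  induction hH : levelSum e (n.betaSet k) using Nat.strong_induction_on generalizing n with
  | _ H ih =>
  by_cases hS : ∃ l, RemoveRibbon e n l
  · obtain ⟨l, hl⟩ := hS
    obtain ⟨hlk, hmove⟩ := hl.beadMove he hn
    obtain ⟨κ, hκ, hcore⟩ := ih _ (by rw [← hH, hmove.levelSum_eq he]; omega) hlk rfl
    exact ⟨κ, .head hl hκ, hcore⟩
  · exact ⟨n, .refl, hS⟩

theorem isECoreOf_iff (he : 0 < e) (hn : n.length ≤ k) :
    IsECoreOf e κ n ↔ κ.length ≤ k ∧ IsSettled e (κ.betaSet k) ∧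
      ∀ r, beadCount e r (κ.betaSet k) = beadCount e r (n.betaSet k) := by
  have hcore : ∀ {κ}, IsECoreOf e κ n → κ.length ≤ k ∧ IsSettled e (κ.betaSet k) ∧
      ∀ r, beadCount e r (κ.betaSet k) = beadCount e r (n.betaSet k) := by
    rintro κ ⟨hchain, hfinal⟩
    obtain ⟨hκ, hcount⟩ : κ.length ≤ k ∧
        ∀ r, beadCount e r (κ.betaSet k) = beadCount e r (n.betaSet k) := by
      clear hfinal
      induction hchain with
      | refl => exact ⟨hn, fun _ => rfl⟩
      | tail _ hstep ih =>
        obtain ⟨hk, hmove⟩ := hstep.beadMove he ih.1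
        exact ⟨hk, fun r => (hmove.beadCount_eq r).trans (ih.2 r)⟩
    exact ⟨hκ, (isSettled_iff_not_removeRibbon he hκ).2 hfinal, hcount⟩
  refine ⟨hcore, fun ⟨hκ, hS, hcount⟩ => ?_⟩
  obtain ⟨κ₀, h₀⟩ := exists_isECoreOf_s16 he hn
  obtain ⟨hκ₀, hS₀, hcount₀⟩ := hcore h₀
  have : κ₀ = κ := eq_of_betaSet_eq hκ₀ hκ
    (hS₀.eq_of_beadCount_eq he hS fun r => (hcount₀ r).trans (hcount r).symm)
  exact this ▸ h₀

theorem isECoreOf_congr (he : 0 < e) (hn : n.length ≤ k) (hl : l.length ≤ k)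
    (h : ∀ r, beadCount e r (n.betaSet k) = beadCount e r (l.betaSet k)) :
    IsECoreOf e κ n ↔ IsECoreOf e κ l := by
  simp only [isECoreOf_iff he hn, isECoreOf_iff he hl, h]

section InsRunner

variable {e α : ℕ}

theorem insRunner_eq_mul_add (p : ℕ) :
    insRunner e α p = (e + 1) * (p / e) + (p % e + if p % e < α then 0 else 1) := by
  rw [insRunner, mul_comm, add_assoc]

theorem runner_insRunner_lt (he : 0 < e) (p : ℕ) :
    (p % e + if p % e < α then 0 else 1) < e + 1 := by
  have := Nat.mod_lt p he
  split_ifs <;> omega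

theorem insRunner_div (he : 0 < e) (p : ℕ) : insRunner e α p / (e + 1) = p / e := by
  rw [insRunner_eq_mul_add, Nat.mul_add_div (Nat.succ_pos e),
    Nat.div_eq_of_lt (runner_insRunner_lt he p), add_zero]

theorem insRunner_mod (he : 0 < e) (p : ℕ) :
    insRunner e α p % (e + 1) = p % e + if p % e < α then 0 else 1 := by
  rw [insRunner_eq_mul_add, Nat.mul_add_mod, Nat.mod_eq_of_lt (runner_insRunner_lt he p)]

theorem insRunner_injective (he : 0 < e) : Function.Injective (insRunner e α) := by
  intro p q h
  have hdiv : p / e = q / e := by rw [← insRunner_div (α := α) he, h, insRunner_div he]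
  have hmod : p % e = q % e := by
    have := insRunner_mod (α := α) he p
    rw [h, insRunner_mod he] at this
    split_ifs at this <;> omega
  rw [← Nat.div_add_mod p e, hdiv, hmod, Nat.div_add_mod]

theorem insRunner_add (he : 0 < e) (p : ℕ) :
    insRunner e α (p + e) = insRunner e α p + (e + 1) := by
  simp only [insRunner, Nat.add_div_right p he, Nat.add_mod_right]
  ring

theorem insRunner_lt {p : ℕ} (hp : p < e) : insRunner e α p < e + 1 := by
  simp only [insRunner, Nat.div_eq_of_lt hp, Nat.mod_eq_of_lt hp]
  split_ifs <;> omega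

theorem IsSettled.image_insRunner (he : 0 < e) {B : Finset ℕ} (hB : IsSettled e B) :
    IsSettled (e + 1) (B.image (insRunner e α)) := by
  intro q hq hle
  obtain ⟨p, hp, rfl⟩ := mem_image.1 hq
  have hep : e ≤ p := not_lt.1 fun h => absurd hle (not_le.2 (insRunner_lt h))
  rw [← Nat.sub_add_cancel hep, insRunner_add he, Nat.add_sub_cancel]
  exact mem_image_of_mem _ (hB p hp hep)

theorem levelSum_image_insRunner (he : 0 < e) (B : Finset ℕ) :
    levelSum (e + 1) (B.image (insRunner e α)) = levelSum e B := by
  rw [levelSum, sum_image fun p _ q _ h => insRunner_injective he h]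
  exact sum_congr rfl fun p _ => insRunner_div he p

/-- Runner `r` of the `e`-abacus becomes runner `r` or `r + 1` of the `(e + 1)`-abacus. -/
theorem beadCount_image_insRunner (he : 0 < e) (s : ℕ) (B : Finset ℕ) :
    beadCount (e + 1) s (B.image (insRunner e α)) =
      ∑ r ∈ (range e).filter (fun r => r + (if r < α then 0 else 1) = s), beadCount e r B := by
  rw [beadCount, filter_image, card_image_of_injective _ (insRunner_injective he),
    ← card_filter_mod_eq_sum he (fun r => r + (if r < α then 0 else 1) = s)]
  simp only [insRunner_mod he]

theorem IsPlus.levelSum_eq {k : ℕ} {l lp : YPartition} (he : 0 < e) (h : IsPlus e α k l lp) :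
    levelSum (e + 1) (lp.betaSet k) = levelSum e (l.betaSet k) := by
  rw [h.2, levelSum_image_insRunner he]

theorem IsPlus.beadCount_congr {k : ℕ} {l m lp mp : YPartition} (he : 0 < e)
    (hlp : IsPlus e α k l lp) (hmp : IsPlus e α k m mp)
    (h : ∀ r, beadCount e r (l.betaSet k) = beadCount e r (m.betaSet k)) (s : ℕ) :
    beadCount (e + 1) s (lp.betaSet k) = beadCount (e + 1) s (mp.betaSet k) := by
  simp only [hlp.2, hmp.2, beadCount_image_insRunner he, h]

end InsRunner

theorem EWeight.isPlus {e α k w : ℕ} {l lp : YPartition} (he : 0 < e) (hl : l.length ≤ k)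
    (hlp : IsPlus e α k l lp) (hw : EWeight e l w) : EWeight (e + 1) lp w := by
  obtain ⟨κ, hκ, hsize⟩ := hw
  obtain ⟨hκk, hκS, hκcount⟩ := (isECoreOf_iff he hl).1 hκ
  obtain ⟨κ', hκ'⟩ := exists_isECoreOf_s16 (Nat.succ_pos e) hlp.1
  obtain ⟨hκ'k, hκ'S, hκ'count⟩ := (isECoreOf_iff (Nat.succ_pos e) hlp.1).1 hκ'
  -- the `(e + 1)`-core of `λ⁺` is `κ⁺`
  have hβ : κ'.betaSet k = (κ.betaSet k).image (insRunner e α) :=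
    hκ'S.eq_of_beadCount_eq (Nat.succ_pos e) (hκS.image_insRunner he) fun s => by
      rw [hκ'count, hlp.2, beadCount_image_insRunner he, beadCount_image_insRunner he]
      simp only [hκcount]
  refine ⟨κ', hκ', (size_eq_add_mul_iff (Nat.succ_pos e) hlp.1 hκ'k
    (fun s => (hκ'count s).symm) w).2 ?_⟩
  rw [hlp.levelSum_eq he, hβ, levelSum_image_insRunner he]
  exact (size_eq_add_mul_iff he hl hκk (fun r => (hκcount r).symm) w).1 hsize

end YPartition

open YPartition

theorem plus_weight_eq_general (e α k n : ℕ) (he : 2 ≤ e)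
    (l m lp mp : YPartition) (hl : l.length ≤ k) (hm : m.length ≤ k)
    (hln : l.size = n) (hmn : m.size = n)
    (hlp : IsPlus e α k l lp) (hmp : IsPlus e α k m mp)
    (hcore : ∃ κ, IsECoreOf e κ l ∧ IsECoreOf e κ m) :
    (∀ w, EWeight e l w → EWeight (e + 1) lp w) ∧
    lp.size = mp.size ∧
    (∃ κ, IsECoreOf (e + 1) κ lp ∧ IsECoreOf (e + 1) κ mp) ∧
    (∀ w, EWeight (e + 1) lp w ↔ EWeight (e + 1) mp w) := by
  have he₀ : 0 < e := by omega
  obtain ⟨κ, hκl, hκm⟩ := hcore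
  have hcount : ∀ r, beadCount e r (l.betaSet k) = beadCount e r (m.betaSet k) := fun r =>
    (((isECoreOf_iff he₀ hl).1 hκl).2.2 r).symm.trans (((isECoreOf_iff he₀ hm).1 hκm).2.2 r)
  have hcount' := hlp.beadCount_congr he₀ hmp hcount
  have hcore' : ∀ κ, IsECoreOf (e + 1) κ lp ↔ IsECoreOf (e + 1) κ mp := fun κ =>
    isECoreOf_congr (Nat.succ_pos e) hlp.1 hmp.1 hcount'
  have hlevel : levelSum e (l.betaSet k) = levelSum e (m.betaSet k) := by
    simpa using (size_eq_add_mul_iff he₀ hl hm hcount 0).1 (by simp [hln, hmn])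
  have hsize : lp.size = mp.size := by
    simpa using (size_eq_add_mul_iff (Nat.succ_pos e) hlp.1 hmp.1 hcount' 0).2
      (by rw [hlp.levelSum_eq he₀, hmp.levelSum_eq he₀, hlevel, add_zero])
  obtain ⟨κ', hκ'⟩ := exists_isECoreOf_s16 (Nat.succ_pos e) hlp.1
  refine ⟨fun _ hw => hw.isPlus he₀ hl hlp, hsize, ⟨κ', hκ', (hcore' κ').1 hκ'⟩,
    fun _ => ?_⟩
  simp only [EWeight, hcore', hsize]

/-- the `(e+1)`-weight of `λ⁺` equals the `e`-weight of `λ`; and if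
`λ, μ` are partitions of `n` of length `≤ k` with the same `e`-core, then `λ⁺`
and `μ⁺` are partitions of the same number with the same `(e+1)`-core and the
same `(e+1)`-weight. -/
theorem plus_weight_eq (e α k n : ℕ) (he : 2 ≤ e) (hα : α ≤ e)
    (l m lp mp : YPartition) (hl : l.length ≤ k) (hm : m.length ≤ k)
    (hln : l.size = n) (hmn : m.size = n)
    (hlp : IsPlus e α k l lp) (hmp : IsPlus e α k m mp)
    (hcore : ∃ κ, IsECoreOf e κ l ∧ IsECoreOf e κ m) :
    (∀ w, EWeight e l w → EWeight (e + 1) lp w) ∧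
    lp.size = mp.size ∧
    (∃ κ, IsECoreOf (e + 1) κ lp ∧ IsECoreOf (e + 1) κ mp) ∧
    (∀ w, EWeight (e + 1) lp w ↔ EWeight (e + 1) mp w) :=
  plus_weight_eq_general e α k n he l m lp mp hl hm hln hmn hlp hmp hcore
end
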